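/- Under the hypotheses of the contraction estimate for the Picard map 𝒢 on C_δ (exponential bound ‖e^{At}‖ ≤ K e^{-κt}, Lipschitz constants L_F, L_G on the δ-ball, and contraction condition (K/κ)(L_F + L_G) ≤ a < 1), if additionally (K/κ)(sup_t ‖G(0,t)‖ + ‖F‖_{∞,δ}) + (K/κ)·2δ(L_F + L_G) ≤ δ, then 𝒢 maps C_δ into itself and hence has a unique fixed point z* ∈ C_δ, a uniformly bounded solution of ż = Az + F(z) + G(z,t). -/

import Mathlib

/-!
By variation of constants, bounded solutions of `ż = A z + N(z, t)` are the fixed points of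
`𝒢 z (t) = ∫_{-∞}^t e^{A(t-s)} N(z(s), s) ds`. The decay `‖e^{At}‖ ≤ K e^{-κt}` gives
`‖𝒢 z‖ ≤ (K/κ) sup ‖N(z, ·)‖` and makes `𝒢` `(K/κ) L`-Lipschitz on the closed `δ`-ball of
bounded continuous functions, a complete space; so Banach's fixed-point theorem applies.
Writing `𝒢 z (t) = e^{At} ∫_{-∞}^t e^{-As} N(z(s), s) ds` and differentiating shows that the fixed
point solves the equation.
-/

open MeasureTheory Set Filter NormedSpace BoundedContinuousFunction
open scoped NNReal

theorem exp_add_smul {𝔸 : Type*} [NormedRing 𝔸] [NormedAlgebra ℝ 𝔸] [CompleteSpace 𝔸]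
    (x : 𝔸) (s t : ℝ) : exp ((s + t) • x) = exp (s • x) * exp (t • x) := by
  -- `exp_add_of_commute` is stated for ℚ-algebras only.
  let : NormedAlgebra ℚ 𝔸 := .restrictScalars ℚ ℝ 𝔸
  rw [add_smul, exp_add_of_commute (((Commute.refl x).smul_left s).smul_right t)]

theorem hasDerivAt_integral_Iic {E : Type*} [NormedAddCommGroup E] [NormedSpace ℝ E]
    [CompleteSpace E] {f : ℝ → E} (hf : Continuous f) (hint : ∀ u, IntegrableOn f (Iic u)) (t : ℝ) :
    HasDerivAt (fun u => ∫ s in Iic u, f s) (f t) t := by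
  have hsplit : ∀ u, ∫ s in Iic u, f s = (∫ s in (0 : ℝ)..u, f s) + ∫ s in Iic 0, f s := by
    intro u
    rw [← intervalIntegral.integral_Iic_sub_Iic (hint 0) (hint u), sub_add_cancel]
  exact ((hf.integral_hasStrictDerivAt 0 t).hasDerivAt.add_const _).congr_of_eventuallyEq
    (Eventually.of_forall hsplit)

theorem exists_unique_fixedPoint_of_continuous_of_norm_le {α E : Type*} [TopologicalSpace α]
    [NormedAddCommGroup E] [CompleteSpace E] {δ : ℝ} (hδ : 0 ≤ δ) {a : ℝ≥0} (ha : a < 1)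
    (Φ : (α → E) → α → E)
    (hΦ : ∀ w, Continuous w → (∀ t, ‖w t‖ ≤ δ) → Continuous (Φ w) ∧ ∀ t, ‖Φ w t‖ ≤ δ)
    (hlip : ∀ w v, Continuous w → Continuous v → (∀ t, ‖w t‖ ≤ δ) → (∀ t, ‖v t‖ ≤ δ) →
      ∀ C, (∀ t, ‖w t - v t‖ ≤ C) → ∀ t, ‖Φ w t - Φ v t‖ ≤ a * C) :
    ∃ z, Continuous z ∧ (∀ t, ‖z t‖ ≤ δ) ∧ Φ z = z ∧
      ∀ w, Continuous w → (∀ t, ‖w t‖ ≤ δ) → Φ w = w → w = z := by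
  set S := Metric.closedBall (0 : α →ᵇ E) δ
  have mem_S (f : α →ᵇ E) : f ∈ S ↔ ∀ t, ‖f t‖ ≤ δ := mem_closedBall_zero_iff.trans (norm_le hδ)
  have : CompleteSpace S := Metric.isClosed_closedBall.completeSpace_coe
  have : Nonempty S := ⟨⟨0, Metric.mem_closedBall_self hδ⟩⟩
  let toS (w : α → E) (hw : Continuous w) (hwδ : ∀ t, ‖w t‖ ≤ δ) : S :=
    ⟨ofNormedAddCommGroup w hw δ hwδ, (mem_S _).2 hwδ⟩
  let Ψ (f : S) : S :=
    have hf := hΦ f f.1.continuous ((mem_S _).1 f.2)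
    toS (Φ f) hf.1 hf.2
  have hΨ : ContractingWith a Ψ := by
    refine ⟨ha, LipschitzWith.of_dist_le_mul fun f g => (dist_le (by positivity)).2 fun t => ?_⟩
    rw [dist_eq_norm]
    refine hlip f g f.1.continuous g.1.continuous ((mem_S _).1 f.2) ((mem_S _).1 g.2) _
      (fun s => ?_) t
    rw [← dist_eq_norm]
    exact dist_coe_le_dist s
  set z := ContractingWith.fixedPoint Ψ hΨ
  refine ⟨z.1, z.1.continuous, (mem_S _).1 z.2,
    congrArg (fun f : S => ⇑f.1) hΨ.fixedPoint_isFixedPt, fun w hw hwδ hfix => ?_⟩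
  have hw_eq : toS w hw hwδ = z :=
    hΨ.fixedPoint_unique (Subtype.ext (ext fun t => congrFun hfix t))
  exact congrArg (fun f : S => ⇑f.1) hw_eq

-- The variation-of-constants integral; the paper's map is `𝒢 z = duhamel A (fun s => N (z s) s)`.
noncomputable def duhamel {E : Type*} [NormedAddCommGroup E] [NormedSpace ℝ E]
    (A : E →L[ℝ] E) (g : ℝ → E) (t : ℝ) : E :=
  ∫ s in Iic t, exp ((t - s) • A) (g s)

section Duhamel

variable {E : Type*} [NormedAddCommGroup E] [NormedSpace ℝ E]
  {A : E →L[ℝ] E} {K κ C : ℝ} {g : ℝ → E}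

theorem exp_smul_apply_exp_smul_apply [CompleteSpace E] (A : E →L[ℝ] E) (s t : ℝ) (v : E) :
    exp (s • A) (exp (t • A) v) = exp ((s + t) • A) v := by
  rw [exp_add_smul A s t]
  rfl

theorem continuous_exp_smul_apply [CompleteSpace E] {f : ℝ → ℝ} (hf : Continuous f)
    (hg : Continuous g) :
    Continuous fun s => exp (f s • A) (g s) := by
  let : NormedAlgebra ℚ (E →L[ℝ] E) := .restrictScalars ℚ ℝ _
  exact (exp_continuous.comp (hf.smul continuous_const)).clm_apply hg

theorem norm_exp_sub_smul_apply_le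
    (hA : ∀ t : ℝ, 0 ≤ t → ‖exp (t • A)‖ ≤ K * Real.exp (-κ * t))
    {s t : ℝ} (hst : s ≤ t) {v : E} (hv : ‖v‖ ≤ C) :
    ‖exp ((t - s) • A) v‖ ≤ K * C * Real.exp (-κ * t) * Real.exp (κ * s) := by
  have hexp := hA (t - s) (sub_nonneg.2 hst)
  calc ‖exp ((t - s) • A) v‖ ≤ ‖exp ((t - s) • A)‖ * ‖v‖ := ContinuousLinearMap.le_opNorm _ _
    _ ≤ K * Real.exp (-κ * (t - s)) * C :=
      mul_le_mul hexp hv (norm_nonneg _) ((norm_nonneg _).trans hexp)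
    _ = K * C * Real.exp (-κ * t) * Real.exp (κ * s) := by
      rw [mul_sub, sub_eq_add_neg, Real.exp_add]
      ring_nf

theorem integrableOn_Iic_exp_sub_smul_apply [CompleteSpace E] (hκ : 0 < κ)
    (hA : ∀ t : ℝ, 0 ≤ t → ‖exp (t • A)‖ ≤ K * Real.exp (-κ * t))
    (hg : Continuous g) (hC : ∀ s, ‖g s‖ ≤ C) (t : ℝ) :
    IntegrableOn (fun s => exp ((t - s) • A) (g s)) (Iic t) := by
  refine ((integrableOn_exp_mul_Iic hκ t).const_mul (K * C * Real.exp (-κ * t))).mono'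
    (continuous_exp_smul_apply (continuous_const.sub continuous_id) hg).aestronglyMeasurable ?_
  filter_upwards [ae_restrict_mem measurableSet_Iic] with s hs
  exact norm_exp_sub_smul_apply_le hA hs (hC s)

theorem integrableOn_Iic_exp_neg_smul_apply [CompleteSpace E] (hκ : 0 < κ)
    (hA : ∀ t : ℝ, 0 ≤ t → ‖exp (t • A)‖ ≤ K * Real.exp (-κ * t))
    (hg : Continuous g) (hC : ∀ s, ‖g s‖ ≤ C) (t : ℝ) :
    IntegrableOn (fun s => exp ((-s) • A) (g s)) (Iic t) := by
  refine ((exp ((-t) • A)).integrable_comp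
    (integrableOn_Iic_exp_sub_smul_apply hκ hA hg hC t)).congr
    (Eventually.of_forall fun s => ?_)
  simp only [exp_smul_apply_exp_smul_apply, neg_add_eq_sub, sub_sub_cancel_left]

theorem norm_duhamel_le (hκ : 0 < κ)
    (hA : ∀ t : ℝ, 0 ≤ t → ‖exp (t • A)‖ ≤ K * Real.exp (-κ * t))
    (hC : ∀ s, ‖g s‖ ≤ C) (t : ℝ) :
    ‖duhamel A g t‖ ≤ K / κ * C := by
  calc ‖duhamel A g t‖ ≤ ∫ s in Iic t, K * C * Real.exp (-κ * t) * Real.exp (κ * s) := by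
        refine norm_integral_le_of_norm_le
          ((integrableOn_exp_mul_Iic hκ t).const_mul _) ?_
        filter_upwards [ae_restrict_mem measurableSet_Iic] with s hs
        exact norm_exp_sub_smul_apply_le hA hs (hC s)
    _ = K / κ * C := by
      rw [integral_const_mul, integral_exp_mul_Iic hκ, mul_div_assoc', mul_assoc,
        ← Real.exp_add, neg_mul, neg_add_cancel, Real.exp_zero]
      ring

theorem duhamel_sub {h : ℝ → E} {t : ℝ}
    (hg : IntegrableOn (fun s => exp ((t - s) • A) (g s)) (Iic t))
    (hh : IntegrableOn (fun s => exp ((t - s) • A) (h s)) (Iic t)) :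
    duhamel A g t - duhamel A h t = duhamel A (g - h) t := by
  simp only [duhamel, ← integral_sub hg hh, Pi.sub_apply, map_sub]

theorem duhamel_eq_exp_smul_apply [CompleteSpace E] (hκ : 0 < κ)
    (hA : ∀ t : ℝ, 0 ≤ t → ‖exp (t • A)‖ ≤ K * Real.exp (-κ * t))
    (hg : Continuous g) (hC : ∀ s, ‖g s‖ ≤ C) (t : ℝ) :
    duhamel A g t = exp (t • A) (∫ s in Iic t, exp ((-s) • A) (g s)) := by
  rw [← ContinuousLinearMap.integral_comp_comm _
    (integrableOn_Iic_exp_neg_smul_apply hκ hA hg hC t)]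
  simp only [duhamel, exp_smul_apply_exp_smul_apply, sub_eq_add_neg]

theorem hasDerivAt_duhamel [CompleteSpace E] (hκ : 0 < κ)
    (hA : ∀ t : ℝ, 0 ≤ t → ‖exp (t • A)‖ ≤ K * Real.exp (-κ * t))
    (hg : Continuous g) (hC : ∀ s, ‖g s‖ ≤ C) (t : ℝ) :
    HasDerivAt (duhamel A g) (A (duhamel A g t) + g t) t := by
  have hY := hasDerivAt_integral_Iic (continuous_exp_smul_apply continuous_neg hg)
    (integrableOn_Iic_exp_neg_smul_apply hκ hA hg hC) t
  have h := (hasDerivAt_exp_smul_const' A t).clm_apply hY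
  rw [mul_apply_eq_comp, ← duhamel_eq_exp_smul_apply hκ hA hg hC,
    exp_smul_apply_exp_smul_apply, add_neg_cancel, zero_smul, exp_zero,
    one_apply_eq_self] at h
  exact h.congr_of_eventuallyEq
    (Eventually.of_forall (duhamel_eq_exp_smul_apply hκ hA hg hC))

theorem continuous_duhamel [CompleteSpace E] (hκ : 0 < κ)
    (hA : ∀ t : ℝ, 0 ≤ t → ‖exp (t • A)‖ ≤ K * Real.exp (-κ * t))
    (hg : Continuous g) (hC : ∀ s, ‖g s‖ ≤ C) : Continuous (duhamel A g) :=
  continuous_iff_continuousAt.2 fun t => (hasDerivAt_duhamel hκ hA hg hC t).continuousAt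

end Duhamel

section BoundedSolution

variable {E : Type*} [NormedAddCommGroup E] [NormedSpace ℝ E] [CompleteSpace E]
  {A : E →L[ℝ] E} {K κ δ M L : ℝ} {N : E → ℝ → E}

theorem duhamel_comp_continuous_and_norm_le (hκ : 0 < κ)
    (hA : ∀ t : ℝ, 0 ≤ t → ‖exp (t • A)‖ ≤ K * Real.exp (-κ * t))
    (hN : Continuous fun p : E × ℝ => N p.1 p.2) (hNM : ∀ x t, ‖x‖ ≤ δ → ‖N x t‖ ≤ M)
    (hself : K / κ * M ≤ δ) {w : ℝ → E} (hw : Continuous w) (hwδ : ∀ t, ‖w t‖ ≤ δ) :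
    Continuous (duhamel A fun s => N (w s) s) ∧ ∀ t, ‖duhamel A (fun s => N (w s) s) t‖ ≤ δ :=
  ⟨continuous_duhamel hκ hA (hN.comp (hw.prodMk continuous_id)) fun s => hNM _ s (hwδ s),
    fun t => (norm_duhamel_le hκ hA (fun s => hNM _ s (hwδ s)) t).trans hself⟩

theorem exists_unique_bounded_solution (hκ : 0 < κ)
    (hA : ∀ t : ℝ, 0 ≤ t → ‖exp (t • A)‖ ≤ K * Real.exp (-κ * t)) (hK : 0 ≤ K)
    (hδ : 0 ≤ δ) (hL : 0 ≤ L) (hN : Continuous fun p : E × ℝ => N p.1 p.2)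
    (hNM : ∀ x t, ‖x‖ ≤ δ → ‖N x t‖ ≤ M)
    (hNL : ∀ x y t, ‖x‖ ≤ δ → ‖y‖ ≤ δ → ‖N x t - N y t‖ ≤ L * ‖x - y‖)
    (hself : K / κ * M ≤ δ) (hcontr : K / κ * L < 1) :
    ∃ z : ℝ → E, (Continuous z ∧ (∀ t, ‖z t‖ ≤ δ) ∧
        (∀ t, duhamel A (fun s => N (z s) s) t = z t) ∧
        ∀ t, HasDerivAt z (A (z t) + N (z t) t) t) ∧
      ∀ w : ℝ → E, Continuous w → (∀ t, ‖w t‖ ≤ δ) →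
        (∀ t, duhamel A (fun s => N (w s) s) t = w t) → w = z := by
  have hcont {w : ℝ → E} (hw : Continuous w) : Continuous fun s => N (w s) s :=
    hN.comp (hw.prodMk continuous_id)
  have hbdd {w : ℝ → E} (hwδ : ∀ t, ‖w t‖ ≤ δ) (s : ℝ) : ‖N (w s) s‖ ≤ M := hNM _ s (hwδ s)
  have hcontract {w v : ℝ → E} (hw : Continuous w) (hv : Continuous v) (hwδ : ∀ t, ‖w t‖ ≤ δ)
      (hvδ : ∀ t, ‖v t‖ ≤ δ) {C : ℝ} (hwv : ∀ t, ‖w t - v t‖ ≤ C) (t : ℝ) :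
      ‖duhamel A (fun s => N (w s) s) t - duhamel A (fun s => N (v s) s) t‖ ≤
        K / κ * L * C := by
    have hdiff (s : ℝ) : ‖((fun s => N (w s) s) - fun s => N (v s) s) s‖ ≤ L * C :=
      (hNL _ _ s (hwδ s) (hvδ s)).trans (mul_le_mul_of_nonneg_left (hwv s) hL)
    rw [duhamel_sub (integrableOn_Iic_exp_sub_smul_apply hκ hA (hcont hw) (hbdd hwδ) t)
      (integrableOn_Iic_exp_sub_smul_apply hκ hA (hcont hv) (hbdd hvδ) t), mul_assoc]
    exact norm_duhamel_le hκ hA hdiff t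
  obtain ⟨z, hz, hzδ, hfix, huniq⟩ := exists_unique_fixedPoint_of_continuous_of_norm_le hδ
    (a := ⟨K / κ * L, by positivity⟩) hcontr (fun w => duhamel A fun s => N (w s) s)
    (fun w hw hwδ => duhamel_comp_continuous_and_norm_le hκ hA hN hNM hself hw hwδ)
    (fun w v hw hv hwδ hvδ C hwv t => hcontract hw hv hwδ hvδ hwv t)
  refine ⟨z, ⟨hz, hzδ, congrFun hfix, fun t => ?_⟩,
    fun w hw hwδ hwfix => huniq w hw hwδ (funext hwfix)⟩
  have hderiv := hasDerivAt_duhamel hκ hA (hcont hz) (hbdd hzδ) t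
  rwa [hfix] at hderiv

end BoundedSolution

theorem stmt5_general {n : ℕ} (A : (Fin n → ℝ) →L[ℝ] (Fin n → ℝ))
    (K κ δ LF LG a MF MG : ℝ) (hK : 0 < K) (hκ : 0 < κ) (hδ : 0 < δ)
    (hLF : 0 ≤ LF) (hLG : 0 ≤ LG)
    (hA : ∀ t : ℝ, 0 ≤ t → ‖NormedSpace.exp (t • A)‖ ≤ K * Real.exp (-κ * t))
    (F : (Fin n → ℝ) → (Fin n → ℝ)) (G : (Fin n → ℝ) → ℝ → (Fin n → ℝ))
    (hFcont : Continuous F) (hGcont : Continuous fun p : (Fin n → ℝ) × ℝ => G p.1 p.2)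
    (hF : ∀ x y : Fin n → ℝ, ‖x‖ ≤ δ → ‖y‖ ≤ δ → ‖F x - F y‖ ≤ LF * ‖x - y‖)
    (hG : ∀ (x y : Fin n → ℝ) (t : ℝ), ‖x‖ ≤ δ → ‖y‖ ≤ δ →
      ‖G x t - G y t‖ ≤ LG * ‖x - y‖)
    (hMF : ∀ x : Fin n → ℝ, ‖x‖ ≤ δ → ‖F x‖ ≤ MF)
    (hMG : ∀ t : ℝ, ‖G 0 t‖ ≤ MG)
    (ha : K / κ * (LF + LG) ≤ a) (ha1 : a < 1)
    (hself : K / κ * (MG + MF) + K / κ * (2 * δ * (LF + LG)) ≤ δ) :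
    (∀ w : ℝ → Fin n → ℝ, Continuous w → (∀ t, ‖w t‖ ≤ δ) →
      Continuous (fun t => ∫ s in Set.Iic t,
          NormedSpace.exp ((t - s) • A) (F (w s) + G (w s) s)) ∧
      ∀ t : ℝ, ‖∫ s in Set.Iic t,
          NormedSpace.exp ((t - s) • A) (F (w s) + G (w s) s)‖ ≤ δ) ∧
    ∃ zs : ℝ → Fin n → ℝ,
      (Continuous zs ∧ (∀ t, ‖zs t‖ ≤ δ) ∧
        (∀ t : ℝ, (∫ s in Set.Iic t,
            NormedSpace.exp ((t - s) • A) (F (zs s) + G (zs s) s)) = zs t) ∧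
        ∀ t : ℝ, HasDerivAt zs (A (zs t) + F (zs t) + G (zs t) t) t) ∧
      ∀ w : ℝ → Fin n → ℝ, Continuous w → (∀ t, ‖w t‖ ≤ δ) →
        (∀ t : ℝ, (∫ s in Set.Iic t,
            NormedSpace.exp ((t - s) • A) (F (w s) + G (w s) s)) = w t) →
        w = zs := by
  have hN : Continuous fun p : (Fin n → ℝ) × ℝ => F p.1 + G p.1 p.2 :=
    (hFcont.comp continuous_fst).add hGcont
  have hNM (x : Fin n → ℝ) (t : ℝ) (hx : ‖x‖ ≤ δ) : ‖F x + G x t‖ ≤ MG + MF + LG * δ := by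
    have hG0 := hG x 0 t hx (by simpa using hδ.le)
    rw [sub_zero] at hG0
    calc ‖F x + G x t‖ ≤ ‖F x‖ + (‖G x t - G 0 t‖ + ‖G 0 t‖) :=
          (norm_add_le _ _).trans (add_le_add_right (norm_le_norm_sub_add _ _) _)
      _ ≤ MG + MF + LG * δ := by
          nlinarith [hMF x hx, hMG t, mul_le_mul_of_nonneg_left hx hLG]
  have hNL (x y : Fin n → ℝ) (t : ℝ) (hx : ‖x‖ ≤ δ) (hy : ‖y‖ ≤ δ) :
      ‖F x + G x t - (F y + G y t)‖ ≤ (LF + LG) * ‖x - y‖ := by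
    rw [add_sub_add_comm, add_mul]
    exact (norm_add_le _ _).trans (add_le_add (hF x y hx hy) (hG x y t hx hy))
  have hself' : K / κ * (MG + MF + LG * δ) ≤ δ := by
    have : LG * δ ≤ 2 * δ * (LF + LG) := by nlinarith
    nlinarith [mul_le_mul_of_nonneg_left this (by positivity : 0 ≤ K / κ)]
  refine ⟨fun w hw hwδ => duhamel_comp_continuous_and_norm_le hκ hA hN hNM hself' hw hwδ, ?_⟩
  obtain ⟨z, ⟨hz, hzδ, hfix, hderiv⟩, huniq⟩ := exists_unique_bounded_solution hκ hA hK.le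
    hδ.le (add_nonneg hLF hLG) hN hNM hNL hself' (ha.trans_lt ha1)
  exact ⟨z, ⟨hz, hzδ, hfix, fun t => by simpa only [add_assoc] using hderiv t⟩, huniq⟩

/-- Under the contraction hypotheses on the Picard map
(𝒢z)(t) = ∫_{-∞}^t e^{A(t-s)}[F(z(s)) + G(z(s),s)] ds, together with the self-map
condition (K/κ)(sup_t‖G(0,t)‖ + ‖F‖_{∞,δ}) + (K/κ)·2δ(L_F+L_G) ≤ δ, the map 𝒢 sends
C_δ into itself and has a unique fixed point z* ∈ C_δ, which is a uniformly bounded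
solution of ż = Az + F(z) + G(z,t). -/
theorem stmt5 {n : ℕ} (A : (Fin n → ℝ) →L[ℝ] (Fin n → ℝ))
    (K κ δ LF LG a MF MG : ℝ) (hK : 0 < K) (hκ : 0 < κ) (hδ : 0 < δ)
    (hLF : 0 ≤ LF) (hLG : 0 ≤ LG)
    (hA : ∀ t : ℝ, 0 ≤ t → ‖NormedSpace.exp (t • A)‖ ≤ K * Real.exp (-κ * t))
    (F : (Fin n → ℝ) → (Fin n → ℝ)) (G : (Fin n → ℝ) → ℝ → (Fin n → ℝ))
    (hFcont : Continuous F) (hGcont : Continuous fun p : (Fin n → ℝ) × ℝ => G p.1 p.2)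
    (hF0 : F 0 = 0)
    (hF : ∀ x y : Fin n → ℝ, ‖x‖ ≤ δ → ‖y‖ ≤ δ → ‖F x - F y‖ ≤ LF * ‖x - y‖)
    (hG : ∀ (x y : Fin n → ℝ) (t : ℝ), ‖x‖ ≤ δ → ‖y‖ ≤ δ →
      ‖G x t - G y t‖ ≤ LG * ‖x - y‖)
    (hMF : ∀ x : Fin n → ℝ, ‖x‖ ≤ δ → ‖F x‖ ≤ MF)
    (hMG : ∀ t : ℝ, ‖G 0 t‖ ≤ MG)
    (ha : K / κ * (LF + LG) ≤ a) (ha1 : a < 1)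
    (hself : K / κ * (MG + MF) + K / κ * (2 * δ * (LF + LG)) ≤ δ) :
    (∀ w : ℝ → Fin n → ℝ, Continuous w → (∀ t, ‖w t‖ ≤ δ) →
      Continuous (fun t => ∫ s in Set.Iic t,
          NormedSpace.exp ((t - s) • A) (F (w s) + G (w s) s)) ∧
      ∀ t : ℝ, ‖∫ s in Set.Iic t,
          NormedSpace.exp ((t - s) • A) (F (w s) + G (w s) s)‖ ≤ δ) ∧
    ∃ zs : ℝ → Fin n → ℝ,
      (Continuous zs ∧ (∀ t, ‖zs t‖ ≤ δ) ∧
        (∀ t : ℝ, (∫ s in Set.Iic t,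
            NormedSpace.exp ((t - s) • A) (F (zs s) + G (zs s) s)) = zs t) ∧
        ∀ t : ℝ, HasDerivAt zs (A (zs t) + F (zs t) + G (zs t) t) t) ∧
      ∀ w : ℝ → Fin n → ℝ, Continuous w → (∀ t, ‖w t‖ ≤ δ) →
        (∀ t : ℝ, (∫ s in Set.Iic t,
            NormedSpace.exp ((t - s) • A) (F (w s) + G (w s) s)) = w t) →
        w = zs :=
  stmt5_general A K κ δ LF LG a MF MG hK hκ hδ hLF hLG hA F G hFcont hGcont hF hG hMF hMG ha ha1
    hself
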